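/- Let 2 ≤ j, k = j+1 ≤ n, and A = R^{j,j+1}. Let x₀ be supported on a set T of (j+1)-element subsets of {1,…,n} with |T| = s < j+1, such that any two distinct members of T intersect in at most j−2 elements. Then ‖A_{T^c}^* A_T (A_T^*A_T)^{−1}‖_∞ ≤ 1/(j+1); consequently, if b = A x₀ + z with ‖z‖_∞ ≤ ε and δ ≥ ε, every solution x̂ of the problem minimize ‖x‖₁ subject to ‖Ax − b‖_∞ ≤ δ satisfies ‖x̂ − x₀‖₁ ≤ (2s(ε + δ)/(1 − s/(j+1))) · √(j+1). -/

import Mathlib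

open scoped Classical
open Finset Matrix

noncomputable section

/-- The normalized Radon matrix `R^{j,k}`: rows are indexed by `j`-element subsets of
`{1,…,n}`, columns by `k`-element subsets, with entry `1/√(C(k,j))` if the row set is
contained in the column set and `0` otherwise. -/
def radon (n j k : ℕ) :
    Matrix {σ : Finset (Fin n) // σ.card = j} {τ : Finset (Fin n) // τ.card = k} ℝ :=
  fun σ τ => if σ.1 ⊆ τ.1 then 1 / Real.sqrt (k.choose j) else 0

/-- The submatrix of `A` consisting of the columns indexed by `T`. -/
def colSub {m p R : Type*} (A : Matrix m p R) (T : Finset p) :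
    Matrix m {x // x ∈ T} R :=
  fun i t => A i t.1

/-- Maximum absolute row sum of a matrix, `‖M‖_∞`. -/
def matInfNorm {m p : Type*} [Fintype p] (M : Matrix m p ℝ) : ℝ :=
  ⨆ i, ∑ j, |M i j|

/-- Maximum absolute column sum of a matrix, `‖M‖₁`. -/
def matOneNorm {m p : Type*} [Fintype m] (M : Matrix m p ℝ) : ℝ :=
  ⨆ j, ∑ i, |M i j|

/-- `ℓ¹` norm of a vector. -/
def vecOneNorm {m : Type*} [Fintype m] (u : m → ℝ) : ℝ := ∑ i, |u i|

/-- `ℓ^∞` norm of a vector. -/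
def vecInfNorm {m : Type*} (u : m → ℝ) : ℝ := ⨆ i, |u i|

/-! For `k = j + 1` the Gram matrix of `R^{j,j+1}` has entries `C(|τ₁ ∩ τ₂|, j)/(j+1)`: columns
are unit vectors, and two distinct columns are orthogonal unless they share `j` elements, in which
case their inner product is `1/(j+1)`. The separation hypothesis therefore makes the columns on `T`
orthonormal, while a column outside `T` meets at most one of them in `j` elements, which gives the
`‖·‖_∞` bound.

For recovery put `h = x̂ - x₀`. Minimality of `‖x̂‖₁` forces `‖h_{Tᶜ}‖₁ ≤ ‖h_T‖₁`, and for `τ ∈ T`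
orthonormality gives `h τ = (Aᵀ A h) τ - ∑_{τ' ∉ T} ⟨A_τ, A_τ'⟩ h τ'`, so
`|h τ| ≤ √(j+1) ‖A h‖_∞ + ‖h_{Tᶜ}‖₁/(j+1)`. Summing over `T` and using `‖A h‖_∞ ≤ ε + δ`
closes the estimate. -/

namespace Finset

variable {α : Type*} [DecidableEq α]

lemma card_inter_lt_of_card_eq {s t : Finset α} (hst : #s = #t) (hne : s ≠ t) :
    #(s ∩ t) < #s :=
  card_lt_card <| inter_subset_left.ssubset_of_ne fun h =>
    hne <| eq_of_subset_of_card_le (inter_eq_left.mp h) hst.ge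

lemma card_inter_add_card_inter_le (a b c : Finset α) :
    #(a ∩ b) + #(a ∩ c) ≤ #a + #(b ∩ c) := by
  have hunion : #((a ∩ b) ∪ (a ∩ c)) ≤ #a :=
    card_le_card (union_subset inter_subset_left inter_subset_left)
  have hinter : #((a ∩ b) ∩ (a ∩ c)) ≤ #(b ∩ c) :=
    card_le_card fun x hx => by simp only [mem_inter] at hx ⊢; exact ⟨hx.1.2, hx.2.2⟩
  have := card_union_add_card_inter (a ∩ b) (a ∩ c)
  omega

end Finset

section Norms

variable {m q : Type*}

lemma vecInfNorm_nonneg (u : m → ℝ) : 0 ≤ vecInfNorm u :=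
  Real.iSup_nonneg fun _ => abs_nonneg _

lemma abs_le_vecInfNorm [Fintype m] (u : m → ℝ) (i : m) : |u i| ≤ vecInfNorm u :=
  le_ciSup (f := fun i => |u i|) (Set.finite_range _).bddAbove i

lemma vecInfNorm_sub_le [Fintype m] (u v : m → ℝ) :
    vecInfNorm (u - v) ≤ vecInfNorm u + vecInfNorm v :=
  Real.iSup_le (fun i => (abs_sub (u i) (v i)).trans <|
      add_le_add (abs_le_vecInfNorm u i) (abs_le_vecInfNorm v i))
    (add_nonneg (vecInfNorm_nonneg u) (vecInfNorm_nonneg v))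

lemma vecInfNorm_neg (u : m → ℝ) : vecInfNorm (-u) = vecInfNorm u := by
  simp only [vecInfNorm, Pi.neg_apply, abs_neg]

lemma vecInfNorm_mulVec_sub_le {p : Type*} [Fintype m] [Fintype p] (A : Matrix m p ℝ)
    (x y : p → ℝ) (b : m → ℝ) :
    vecInfNorm (A *ᵥ (x - y)) ≤ vecInfNorm (A *ᵥ x - b) + vecInfNorm (A *ᵥ y - b) := by
  rw [Matrix.mulVec_sub, ← sub_sub_sub_cancel_right _ _ b]
  exact vecInfNorm_sub_le _ _

lemma matInfNorm_le_of_subsingleton_support [Fintype q] {M : Matrix m q ℝ} {μ : ℝ}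
    (hμ : 0 ≤ μ) (hM : ∀ i k, |M i k| ≤ μ)
    (hsupp : ∀ i k k', M i k ≠ 0 → M i k' ≠ 0 → k = k') :
    matInfNorm M ≤ μ := by
  refine Real.iSup_le (fun i => ?_) hμ
  by_cases h : ∃ k, M i k ≠ 0
  · obtain ⟨k, hk⟩ := h
    rw [Finset.sum_eq_single k (fun k' _ hk' => abs_eq_zero.mpr <| by
        by_contra h'; exact hk' (hsupp i k' k h' hk)) (by simp)]
    exact hM i k
  · push Not at h
    simp [h, hμ]

end Norms

lemma transpose_colSub_mul_colSub_apply {m p : Type*} [Fintype m] (A : Matrix m p ℝ)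
    (S T : Finset p) (i : {x // x ∈ S}) (t : {x // x ∈ T}) :
    ((colSub A S)ᵀ * colSub A T) i t = (Aᵀ * A) i.1 t.1 := by
  simp only [Matrix.mul_apply, Matrix.transpose_apply, colSub]

lemma transpose_colSub_mul_colSub_eq_one {m p : Type*} [Fintype m] [DecidableEq p]
    {A : Matrix m p ℝ} {T : Finset p}
    (hG : ∀ τ ∈ T, ∀ τ' ∈ T, (Aᵀ * A) τ τ' = (1 : Matrix p p ℝ) τ τ') :
    (colSub A T)ᵀ * colSub A T = 1 := by
  ext t t'
  rw [transpose_colSub_mul_colSub_apply, hG _ t.2 _ t'.2]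
  simp only [Matrix.one_apply, Subtype.ext_iff]

section Recovery

variable {m p : Type*} [Fintype m] [Fintype p] [DecidableEq p]

lemma sum_compl_abs_sub_le_sum_abs_sub {T : Finset p} {x₀ x : p → ℝ}
    (hx₀ : ∀ τ ∉ T, x₀ τ = 0) (hx : vecOneNorm x ≤ vecOneNorm x₀) :
    ∑ τ ∈ Tᶜ, |x τ - x₀ τ| ≤ ∑ τ ∈ T, |x τ - x₀ τ| := by
  have hcompl : ∀ τ ∈ Tᶜ, x₀ τ = 0 := fun τ hτ => hx₀ τ (mem_compl.mp hτ)
  have hnorm₀ : vecOneNorm x₀ = ∑ τ ∈ T, |x₀ τ| := by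
    rw [vecOneNorm, ← sum_add_sum_compl T, sum_eq_zero (s := Tᶜ) fun τ hτ => by
      simp [hcompl τ hτ], add_zero]
  have hnorm : vecOneNorm x = ∑ τ ∈ T, |x τ| + ∑ τ ∈ Tᶜ, |x τ - x₀ τ| := by
    rw [vecOneNorm, ← sum_add_sum_compl T]
    exact congrArg _ (sum_congr rfl fun τ hτ => by rw [hcompl τ hτ, sub_zero])
  have htriangle : ∑ τ ∈ T, |x₀ τ| ≤ ∑ τ ∈ T, |x τ| + ∑ τ ∈ T, |x τ - x₀ τ| := by
    rw [← sum_add_distrib]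
    refine sum_le_sum fun τ _ => ?_
    have := abs_sub_abs_le_abs_sub (x₀ τ) (x τ)
    rw [abs_sub_comm] at this
    linarith
  linarith

variable {A : Matrix m p ℝ} {T : Finset p} {μ c : ℝ}

lemma abs_le_of_transpose_mul_self
    (hG : ∀ τ ∈ T, ∀ τ' ∈ T, (Aᵀ * A) τ τ' = (1 : Matrix p p ℝ) τ τ')
    (hcoh : ∀ τ ∈ T, ∀ τ' ∉ T, |(Aᵀ * A) τ τ'| ≤ μ) (hcol : ∀ τ, ∑ σ, |A σ τ| ≤ c)
    (h : p → ℝ) {τ : p} (hτ : τ ∈ T) :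
    |h τ| ≤ c * vecInfNorm (A *ᵥ h) + μ * ∑ τ' ∈ Tᶜ, |h τ'| := by
  have hsplit : ((Aᵀ * A) *ᵥ h) τ = h τ + ∑ τ' ∈ Tᶜ, (Aᵀ * A) τ τ' * h τ' := by
    rw [Matrix.mulVec, dotProduct, ← sum_add_sum_compl T,
      sum_congr rfl fun τ' hτ' => by rw [hG τ hτ τ' hτ']]
    simp [Matrix.one_apply, hτ]
  have hmain : |((Aᵀ * A) *ᵥ h) τ| ≤ c * vecInfNorm (A *ᵥ h) := by
    rw [← Matrix.mulVec_mulVec, Matrix.mulVec, dotProduct]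
    calc |∑ σ, Aᵀ τ σ * (A *ᵥ h) σ|
        ≤ ∑ σ, |A σ τ| * vecInfNorm (A *ᵥ h) := by
          refine (abs_sum_le_sum_abs _ _).trans (sum_le_sum fun σ _ => ?_)
          rw [abs_mul, Matrix.transpose_apply]
          exact mul_le_mul_of_nonneg_left (abs_le_vecInfNorm _ σ) (abs_nonneg _)
      _ ≤ c * vecInfNorm (A *ᵥ h) := by
          rw [← sum_mul]
          exact mul_le_mul_of_nonneg_right (hcol τ) (vecInfNorm_nonneg _)
  have hrest : |∑ τ' ∈ Tᶜ, (Aᵀ * A) τ τ' * h τ'| ≤ μ * ∑ τ' ∈ Tᶜ, |h τ'| := by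
    rw [mul_sum]
    refine (abs_sum_le_sum_abs _ _).trans (sum_le_sum fun τ' hτ' => ?_)
    rw [abs_mul]
    exact mul_le_mul_of_nonneg_right (hcoh τ hτ τ' (mem_compl.mp hτ')) (abs_nonneg _)
  have : h τ = ((Aᵀ * A) *ᵥ h) τ - ∑ τ' ∈ Tᶜ, (Aᵀ * A) τ τ' * h τ' := by
    rw [hsplit]; ring
  rw [this]
  exact (abs_sub _ _).trans (add_le_add hmain hrest)

theorem vecOneNorm_sub_le_of_transpose_mul_self
    (hG : ∀ τ ∈ T, ∀ τ' ∈ T, (Aᵀ * A) τ τ' = (1 : Matrix p p ℝ) τ τ')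
    (hcoh : ∀ τ ∈ T, ∀ τ' ∉ T, |(Aᵀ * A) τ τ'| ≤ μ) (hcol : ∀ τ, ∑ σ, |A σ τ| ≤ c)
    (hμ : 0 ≤ μ) (hTμ : #T * μ < 1) {x₀ x : p → ℝ} (hx₀ : ∀ τ ∉ T, x₀ τ = 0)
    (hx : vecOneNorm x ≤ vecOneNorm x₀) :
    vecOneNorm (x - x₀) ≤ 2 * #T * vecInfNorm (A *ᵥ (x - x₀)) / (1 - #T * μ) * c := by
  set h := x - x₀
  set onT := ∑ τ ∈ T, |h τ|
  set offT := ∑ τ ∈ Tᶜ, |h τ|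
  have hcone : offT ≤ onT := sum_compl_abs_sub_le_sum_abs_sub hx₀ hx
  have hsum : onT ≤ #T * (c * vecInfNorm (A *ᵥ h) + μ * offT) := by
    rw [← nsmul_eq_mul]
    exact sum_le_card_nsmul _ _ _ fun τ hτ => abs_le_of_transpose_mul_self hG hcoh hcol h hτ
  have honT : onT ≤ #T * vecInfNorm (A *ᵥ h) / (1 - #T * μ) * c := by
    rw [div_mul_eq_mul_div, le_div_iff₀ (by linarith)]
    nlinarith [mul_le_mul_of_nonneg_left hcone (mul_nonneg (Nat.cast_nonneg #T) hμ)]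
  calc vecOneNorm h = onT + offT := (sum_add_sum_compl T _).symm
    _ ≤ 2 * onT := by linarith
    _ ≤ 2 * (#T * vecInfNorm (A *ᵥ h) / (1 - #T * μ) * c) := by gcongr
    _ = 2 * #T * vecInfNorm (A *ᵥ h) / (1 - #T * μ) * c := by ring

end Recovery

section Radon

variable {n j k : ℕ}

lemma radon_apply (σ : {σ : Finset (Fin n) // σ.card = j})
    (τ : {τ : Finset (Fin n) // τ.card = k}) :
    radon n j k σ τ = if σ.1 ⊆ τ.1 then 1 / Real.sqrt (k.choose j) else 0 := rfl

lemma card_filter_subset_eq_choose (I : Finset (Fin n)) :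
    #(univ.filter fun σ : {σ : Finset (Fin n) // σ.card = j} => σ.1 ⊆ I) = (#I).choose j := by
  rw [← card_powersetCard j I]
  refine card_bij (fun σ _ => σ.1) (fun σ hσ => ?_) (fun _ _ _ _ h => Subtype.ext h) ?_
  · exact mem_powersetCard.mpr ⟨(mem_filter.mp hσ).2, σ.2⟩
  · intro t ht
    obtain ⟨hsub, hcard⟩ := mem_powersetCard.mp ht
    exact ⟨⟨t, hcard⟩, by simp [hsub], rfl⟩

lemma sum_abs_radon (τ : {τ : Finset (Fin n) // τ.card = k}) :
    ∑ σ, |radon n j k σ τ| = Real.sqrt (k.choose j) := by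
  simp_rw [radon_apply, apply_ite, abs_zero]
  rw [← sum_filter, sum_const, card_filter_subset_eq_choose, τ.2, nsmul_eq_mul,
    abs_of_nonneg (by positivity), mul_one_div, Real.div_sqrt]

lemma radon_transpose_mul_self_apply (τ₁ τ₂ : {τ : Finset (Fin n) // τ.card = k}) :
    ((radon n j k)ᵀ * radon n j k) τ₁ τ₂ = ((#(τ₁.1 ∩ τ₂.1)).choose j : ℝ) / k.choose j := by
  have hterm (σ : {σ : Finset (Fin n) // σ.card = j}) :
      radon n j k σ τ₁ * radon n j k σ τ₂ =
        if σ.1 ⊆ τ₁.1 ∩ τ₂.1 then 1 / (k.choose j : ℝ) else 0 := by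
    simp only [radon_apply, subset_inter_iff]
    split_ifs <;> simp_all [← mul_inv]
  simp only [Matrix.mul_apply, Matrix.transpose_apply, hterm]
  rw [← sum_filter, sum_const, card_filter_subset_eq_choose, nsmul_eq_mul, mul_one_div]

lemma radon_transpose_mul_self_apply_self (hjk : j ≤ k)
    (τ : {τ : Finset (Fin n) // τ.card = k}) :
    ((radon n j k)ᵀ * radon n j k) τ τ = 1 := by
  rw [radon_transpose_mul_self_apply, inter_self, τ.2,
    div_self (Nat.cast_ne_zero.mpr (Nat.choose_pos hjk).ne')]

lemma radon_transpose_mul_self_apply_eq_zero {τ₁ τ₂ : {τ : Finset (Fin n) // τ.card = k}}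
    (h : #(τ₁.1 ∩ τ₂.1) < j) : ((radon n j k)ᵀ * radon n j k) τ₁ τ₂ = 0 := by
  rw [radon_transpose_mul_self_apply, Nat.choose_eq_zero_of_lt h, Nat.cast_zero, zero_div]

lemma le_card_inter_of_radon_transpose_mul_self_apply_ne_zero
    {τ₁ τ₂ : {τ : Finset (Fin n) // τ.card = k}}
    (h : ((radon n j k)ᵀ * radon n j k) τ₁ τ₂ ≠ 0) : j ≤ #(τ₁.1 ∩ τ₂.1) :=
  not_lt.mp fun hlt => h (radon_transpose_mul_self_apply_eq_zero hlt)

lemma abs_radon_succ_transpose_mul_self_apply_le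
    {τ₁ τ₂ : {τ : Finset (Fin n) // τ.card = j + 1}} (hne : τ₁ ≠ τ₂) :
    |((radon n j (j + 1))ᵀ * radon n j (j + 1)) τ₁ τ₂| ≤ 1 / ((j : ℝ) + 1) := by
  have hinter : #(τ₁.1 ∩ τ₂.1) < j + 1 := by
    simpa [τ₁.2] using card_inter_lt_of_card_eq (τ₁.2.trans τ₂.2.symm)
      (Subtype.coe_injective.ne hne)
  have hchoose : (#(τ₁.1 ∩ τ₂.1)).choose j ≤ 1 := by
    rcases (Nat.lt_succ_iff.mp hinter).lt_or_eq with hlt | heq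
    · rw [Nat.choose_eq_zero_of_lt hlt]; exact zero_le_one
    · rw [heq, Nat.choose_self]
  rw [radon_transpose_mul_self_apply, Nat.choose_succ_self_right, abs_of_nonneg (by positivity)]
  push_cast
  gcongr
  exact_mod_cast hchoose

lemma sum_abs_radon_succ (τ : {τ : Finset (Fin n) // τ.card = j + 1}) :
    ∑ σ, |radon n j (j + 1) σ τ| = Real.sqrt ((j : ℝ) + 1) := by
  rw [sum_abs_radon, Nat.choose_succ_self_right, Nat.cast_succ]

variable {T : Finset {τ : Finset (Fin n) // τ.card = j + 1}}

lemma radon_succ_transpose_mul_self_apply_of_mem (hj : 0 < j)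
    (hsep : ∀ σ₁ ∈ T, ∀ σ₂ ∈ T, σ₁ ≠ σ₂ → (σ₁.1 ∩ σ₂.1).card ≤ j - 2)
    {τ τ' : {τ : Finset (Fin n) // τ.card = j + 1}} (hτ : τ ∈ T) (hτ' : τ' ∈ T) :
    ((radon n j (j + 1))ᵀ * radon n j (j + 1)) τ τ' = (1 : Matrix _ _ ℝ) τ τ' := by
  rcases eq_or_ne τ τ' with rfl | hne
  · rw [Matrix.one_apply_eq]
    exact radon_transpose_mul_self_apply_self j.le_succ τ
  · rw [Matrix.one_apply_ne hne]
    exact radon_transpose_mul_self_apply_eq_zero (by have := hsep τ hτ τ' hτ' hne; omega)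

theorem matInfNorm_radon_succ_le (hj : 2 ≤ j)
    (hsep : ∀ σ₁ ∈ T, ∀ σ₂ ∈ T, σ₁ ≠ σ₂ → (σ₁.1 ∩ σ₂.1).card ≤ j - 2) :
    matInfNorm ((colSub (radon n j (j + 1)) Tᶜ)ᵀ * colSub (radon n j (j + 1)) T *
      (((colSub (radon n j (j + 1)) T)ᵀ * colSub (radon n j (j + 1)) T)⁻¹)) ≤
        1 / ((j : ℝ) + 1) := by
  rw [transpose_colSub_mul_colSub_eq_one fun τ hτ τ' hτ' =>
      radon_succ_transpose_mul_self_apply_of_mem (by omega) hsep hτ hτ',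
    inv_one, Matrix.mul_one]
  refine matInfNorm_le_of_subsingleton_support (by positivity) (fun i t => ?_)
    (fun i t t' ht ht' => ?_)
  · rw [transpose_colSub_mul_colSub_apply]
    exact abs_radon_succ_transpose_mul_self_apply_le fun h => mem_compl.mp i.2 (h ▸ t.2)
  · -- `t` and `t'` would both share `j` of the `j + 1` elements of `i`
    rw [transpose_colSub_mul_colSub_apply] at ht ht'
    by_contra hne
    have := card_inter_add_card_inter_le i.1.1 t.1.1 t'.1.1
    have := le_card_inter_of_radon_transpose_mul_self_apply_ne_zero ht
    have := le_card_inter_of_radon_transpose_mul_self_apply_ne_zero ht'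
    have := hsep t.1 t.2 t'.1 t'.2 (Subtype.coe_injective.ne hne)
    have := i.1.2
    omega

end Radon

theorem stmt17_general (n j : ℕ) (hj : 2 ≤ j)
    (x₀ : {τ : Finset (Fin n) // τ.card = j + 1} → ℝ)
    (T : Finset {τ : Finset (Fin n) // τ.card = j + 1})
    (hT : T = Finset.univ.filter (fun τ => x₀ τ ≠ 0))
    (s : ℕ) (hs : T.card = s) (hsj : s < j + 1)
    (hsep : ∀ σ₁ ∈ T, ∀ σ₂ ∈ T, σ₁ ≠ σ₂ → (σ₁.1 ∩ σ₂.1).card ≤ j - 2) :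
    matInfNorm ((colSub (radon n j (j + 1)) Tᶜ)ᵀ * colSub (radon n j (j + 1)) T *
      (((colSub (radon n j (j + 1)) T)ᵀ * colSub (radon n j (j + 1)) T)⁻¹)) ≤
        1 / ((j : ℝ) + 1) ∧
    ∀ (z : {σ : Finset (Fin n) // σ.card = j} → ℝ) (ε δ : ℝ)
      (b : {σ : Finset (Fin n) // σ.card = j} → ℝ),
      vecInfNorm z ≤ ε → b = (radon n j (j + 1)).mulVec x₀ + z → ε ≤ δ →
      ∀ xhat : {τ : Finset (Fin n) // τ.card = j + 1} → ℝ,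
        vecInfNorm ((radon n j (j + 1)).mulVec xhat - b) ≤ δ →
        (∀ y, vecInfNorm ((radon n j (j + 1)).mulVec y - b) ≤ δ →
          vecOneNorm xhat ≤ vecOneNorm y) →
        vecOneNorm (xhat - x₀) ≤
          2 * (s : ℝ) * (ε + δ) / (1 - (s : ℝ) / ((j : ℝ) + 1)) *
            Real.sqrt ((j : ℝ) + 1) := by
  set A := radon n j (j + 1)
  have hx₀ : ∀ τ ∉ T, x₀ τ = 0 := fun τ hτ => by simpa [hT] using hτ
  refine ⟨matInfNorm_radon_succ_le hj hsep, fun z ε δ b hz hb hεδ xhat hfeas hmin => ?_⟩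
  subst hb hs
  have hnoise : vecInfNorm (A *ᵥ x₀ - (A *ᵥ x₀ + z)) ≤ ε := by
    rw [sub_add_cancel_left, vecInfNorm_neg]
    exact hz
  have hTμ : (#T : ℝ) * (1 / ((j : ℝ) + 1)) < 1 := by
    rw [mul_one_div, div_lt_one (by positivity)]
    exact_mod_cast hsj
  calc vecOneNorm (xhat - x₀)
      ≤ 2 * #T * vecInfNorm (A *ᵥ (xhat - x₀)) / (1 - #T * (1 / ((j : ℝ) + 1))) *
          Real.sqrt ((j : ℝ) + 1) :=
        vecOneNorm_sub_le_of_transpose_mul_self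
          (fun τ hτ τ' hτ' => radon_succ_transpose_mul_self_apply_of_mem (by omega) hsep hτ hτ')
          (fun τ hτ τ' hτ' => abs_radon_succ_transpose_mul_self_apply_le fun h => hτ' (h ▸ hτ))
          (fun τ => (sum_abs_radon_succ τ).le) (by positivity) hTμ hx₀
          (hmin x₀ (hnoise.trans hεδ))
    _ ≤ 2 * #T * (ε + δ) / (1 - #T / ((j : ℝ) + 1)) * Real.sqrt ((j : ℝ) + 1) := by
      rw [mul_one_div] at hTμ ⊢
      gcongr
      exact (vecInfNorm_mulVec_sub_le A xhat x₀ _).trans (by linarith)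

/-- the case `k = j+1`. If the support `T` of `x₀` has `|T| = s < j+1`
and pairwise overlaps at most `j-2`, then the IRR quantity is at most `1/(j+1)` and the
stable recovery bound `‖xhat − x₀‖₁ ≤ (2s(ε+δ)/(1 − s/(j+1)))·√(j+1)` holds for every
solution of the noisy `ℓ¹` program. -/
theorem stmt17 (n j : ℕ) (hj : 2 ≤ j) (hk : j + 1 ≤ n)
    (x₀ : {τ : Finset (Fin n) // τ.card = j + 1} → ℝ)
    (T : Finset {τ : Finset (Fin n) // τ.card = j + 1})
    (hT : T = Finset.univ.filter (fun τ => x₀ τ ≠ 0))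
    (s : ℕ) (hs : T.card = s) (hsj : s < j + 1)
    (hsep : ∀ σ₁ ∈ T, ∀ σ₂ ∈ T, σ₁ ≠ σ₂ → (σ₁.1 ∩ σ₂.1).card ≤ j - 2) :
    matInfNorm ((colSub (radon n j (j + 1)) Tᶜ)ᵀ * colSub (radon n j (j + 1)) T *
      (((colSub (radon n j (j + 1)) T)ᵀ * colSub (radon n j (j + 1)) T)⁻¹)) ≤
        1 / ((j : ℝ) + 1) ∧
    ∀ (z : {σ : Finset (Fin n) // σ.card = j} → ℝ) (ε δ : ℝ)
      (b : {σ : Finset (Fin n) // σ.card = j} → ℝ),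
      vecInfNorm z ≤ ε → b = (radon n j (j + 1)).mulVec x₀ + z → ε ≤ δ →
      ∀ xhat : {τ : Finset (Fin n) // τ.card = j + 1} → ℝ,
        vecInfNorm ((radon n j (j + 1)).mulVec xhat - b) ≤ δ →
        (∀ y, vecInfNorm ((radon n j (j + 1)).mulVec y - b) ≤ δ →
          vecOneNorm xhat ≤ vecOneNorm y) →
        vecOneNorm (xhat - x₀) ≤
          2 * (s : ℝ) * (ε + δ) / (1 - (s : ℝ) / ((j : ℝ) + 1)) *
            Real.sqrt ((j : ℝ) + 1) :=
  stmt17_general n j hj x₀ T hT s hs hsj hsep
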